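/- The number of pairs (x, a) such that x ∈ N2 ∪ Q and a is a new right-extension of x in T' — i.e., xa is not a substring of T and some crossing occurrence of x in T' is immediately followed by a — is at most |M(T)|. -/

import Mathlib

open scoped Classical

namespace CDAWG

variable {α : Type*} [DecidableEq α]

/-- The finite set of contiguous substrings (infixes) of `T`. -/
def infixes (T : List α) : Finset (List α) := (T.tails.flatMap List.inits).toFinset

/-- `x` occurs in `S` starting at the 1-based position `j`
    (i.e. `x = S[j..j+|x|-1]`). -/
def OccAt (S x : List α) (j : ℕ) : Prop :=
  1 ≤ j ∧ x ≠ [] ∧ j + x.length - 1 ≤ S.length ∧ (S.drop (j - 1)).take x.length = x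

/-- `x` is a left-maximal substring of `T`. -/
def LeftMax (T x : List α) : Prop :=
  x <:+: T ∧ ((∃ a b : α, a ≠ b ∧ (a :: x) <:+: T ∧ (b :: x) <:+: T) ∨ x <+: T)

/-- `x` is a right-maximal substring of `T`. -/
def RightMax (T x : List α) : Prop :=
  x <:+: T ∧ ((∃ a b : α, a ≠ b ∧ (x ++ [a]) <:+: T ∧ (x ++ [b]) <:+: T) ∨ x <:+ T)

/-- `LeftM(T)`: the set of left-maximal substrings of `T`. -/
noncomputable def LeftMfin (T : List α) : Finset (List α) :=
  (infixes T).filter (fun x => LeftMax T x)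

/-- `RightM(T)`: the set of right-maximal substrings of `T`. -/
noncomputable def RightMfin (T : List α) : Finset (List α) :=
  (infixes T).filter (fun x => RightMax T x)

/-- `M(T) = LeftM(T) ∩ RightM(T)`: the maximal substrings of `T`. -/
noncomputable def Mfin (T : List α) : Finset (List α) :=
  (infixes T).filter (fun x => LeftMax T x ∧ RightMax T x)

/-- `MR(T) = M(T) \ {T}`: the maximal repeats of `T`. -/
noncomputable def MRfin (T : List α) : Finset (List α) := (Mfin T).erase T

/-- `D_T(x)`: the number of distinct characters `a` with `xa` a substring of `T`. -/
noncomputable def D (T x : List α) : ℕ :=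
  ((infixes T).filter (fun w => w.length = x.length + 1 ∧ x <+: w)).card

/-- The CDAWG size `e(T) = Σ_{x ∈ MR(T)} D_T(x)`. -/
noncomputable def esize (T : List α) : ℕ := ∑ x ∈ MRfin T, D T x

/-- `T` terminates with a unique end-marker: its last character occurs
    nowhere else in `T`. -/
def EndMarked (T : List α) : Prop := ∃ c, T.getLast? = some c ∧ T.count c = 1

/-- `rrep_T(S) = Sβ` where `β` is the shortest string such that `Sβ` is
    right-maximal in `T`. -/
noncomputable def rrep (T S : List α) : List α :=
  Classical.epsilon (fun w => S <+: w ∧ w <:+: T ∧ RightMax T w ∧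
    ∀ w', S <+: w' → w' <:+: T → RightMax T w' → w.length ≤ w'.length)

/-- The in-degree of node `x` in the CDAWG of `T`: the number of pairs `(y, a)`
    with `y ∈ MR(T)`, `ya` a substring of `T` and `rrep_T(ya) = x`. -/
noncomputable def indeg (T x : List α) : ℕ :=
  ((MRfin T ×ˢ T.toFinset).filter
    (fun p => (p.1 ++ [p.2]) <:+: T ∧ rrep T (p.1 ++ [p.2]) = x)).card

/-- `I_T(x)`: the set of nodes having an edge to `x` in the CDAWG of `T`. -/
noncomputable def Ifin (T x : List α) : Finset (List α) :=
  (MRfin T).filter (fun y => ∃ a, (y ++ [a]) <:+: T ∧ rrep T (y ++ [a]) = x)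

/-- `v1(T)`: the number of nodes of in-degree 1 in the CDAWG of `T`. -/
noncomputable def v1 (T : List α) : ℕ :=
  ((Mfin T).filter (fun x => indeg T x = 1)).card

/-- The CDAWG-grammar size `g(T) = e(T) - v1(T)`. -/
noncomputable def gsize (T : List α) : ℕ := esize T - v1 T

/-- A single-character edit operation. -/
inductive Edit (α : Type*) where
  | ins : α → Edit α
  | del : Edit α
  | sub : α → Edit α

/-- Applying a single-character edit at the 1-based position `i`. -/
def Edit.apply (T : List α) (i : ℕ) : Edit α → List α
  | .ins c => T.take (i - 1) ++ c :: T.drop (i - 1)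
  | .del => T.take (i - 1) ++ T.drop i
  | .sub c => T.take (i - 1) ++ c :: T.drop i

/-- Validity of the edit position. -/
def Edit.valid (T : List α) (i : ℕ) : Edit α → Prop
  | .ins _ => 1 ≤ i ∧ i ≤ T.length + 1
  | .del => 1 ≤ i ∧ i ≤ T.length
  | .sub _ => 1 ≤ i ∧ i ≤ T.length

/-- Whether the edit is a deletion. -/
def Edit.isDel : Edit α → Bool
  | .del => true
  | _ => false

/-- The occurrence of `x` in `T'` starting at `j` (and ending at
    `k = j + |x| - 1`) is a crossing occurrence for the edited position `i`. -/
def CrossAt (isDel : Bool) (i : ℕ) (T' x : List α) (j : ℕ) : Prop :=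
  OccAt T' x j ∧
    (if isDel then
      (j + x.length - 1 = i - 1 ∨ (j ≤ i - 1 ∧ i ≤ j + x.length - 1) ∨ j = i)
    else
      (j + x.length - 1 = i - 1 ∨ (j ≤ i ∧ i ≤ j + x.length - 1) ∨ j = i + 1))

/-- Starting position of the leftmost crossing occurrence `x_L` of `x` in `T'`. -/
noncomputable def jL (isDel : Bool) (i : ℕ) (T' x : List α) : ℕ :=
  sInf {j | CrossAt isDel i T' x j}

/-- Starting position of the rightmost crossing occurrence `x_R` of `x` in `T'`. -/
noncomputable def jR (isDel : Bool) (i : ℕ) (T' x : List α) : ℕ :=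
  sSup {j | CrossAt isDel i T' x j}

/-- `S_{x_G}` for the crossing occurrence of `x` starting at `j` and ending at
    `k = j + |x| - 1`: it is `ε` if `k = i - 1`, and `T'[i..k]` otherwise. -/
def Socc (i : ℕ) (T' x : List α) (j : ℕ) : List α :=
  if j + x.length - 1 = i - 1 then [] else (T'.drop (i - 1)).take (j + x.length - 1 - i + 1)

/-- `S_{x_L}`. -/
noncomputable def SL (isDel : Bool) (i : ℕ) (T' x : List α) : List α :=
  Socc i T' x (jL isDel i T' x)

/-- `S_{x_R}`. -/
noncomputable def SR (isDel : Bool) (i : ℕ) (T' x : List α) : List α :=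
  Socc i T' x (jR isDel i T' x)

/-- `N = (M(T') \ M(T)) \ {T'}`. -/
noncomputable def Nfin (T T' : List α) : Finset (List α) := (Mfin T' \ Mfin T).erase T'

/-- `N1 = N ∩ RightM(T)`. -/
noncomputable def N1 (T T' : List α) : Finset (List α) := Nfin T T' ∩ RightMfin T

/-- `N2 = N ∩ LeftM(T)`. -/
noncomputable def N2 (T T' : List α) : Finset (List α) := Nfin T T' ∩ LeftMfin T

/-- `N3 = N \ (N1 ∪ N2)`. -/
noncomputable def N3 (T T' : List α) : Finset (List α) :=
  Nfin T T' \ (N1 T T' ∪ N2 T T')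

/-- `Q = MR(T') ∩ MR(T)`. -/
noncomputable def Q (T T' : List α) : Finset (List α) := MRfin T' ∩ MRfin T

/-- `Nadd`: the set of `x ∈ N3` such that (1) `x` would be a maximal repeat of
    `T'` even if all occurrences of `x` in `T'` were crossing occurrences
    (i.e. the crossing occurrences alone witness left- and right-maximality),
    and (2) `x` has no right-extension in `T'` other than the right-extensions
    of its crossing occurrences. -/
noncomputable def Nadd (isDel : Bool) (i : ℕ) (T T' : List α) : Finset (List α) :=
  (N3 T T').filter (fun x =>
    (((∃ a b : α, a ≠ b ∧ (∃ j, CrossAt isDel i T' x j ∧ OccAt T' (a :: x) (j - 1)) ∧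
          (∃ j, CrossAt isDel i T' x j ∧ OccAt T' (b :: x) (j - 1)))
        ∨ (∃ j, CrossAt isDel i T' x j ∧ j = 1))
      ∧ ((∃ a b : α, a ≠ b ∧ (∃ j, CrossAt isDel i T' x j ∧ OccAt T' (x ++ [a]) j) ∧
          (∃ j, CrossAt isDel i T' x j ∧ OccAt T' (x ++ [b]) j))
        ∨ (∃ j, CrossAt isDel i T' x j ∧ j + x.length - 1 = T'.length)))
    ∧ (∀ a : α, (x ++ [a]) <:+: T' → ∃ j, CrossAt isDel i T' x j ∧ OccAt T' (x ++ [a]) j))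

/-- `Nbase = N3 \ Nadd`. -/
noncomputable def Nbase (isDel : Bool) (i : ℕ) (T T' : List α) : Finset (List α) :=
  N3 T T' \ Nadd isDel i T T'

/-- `N1 ∪ Nbase`. -/
noncomputable def NB (isDel : Bool) (i : ℕ) (T T' : List α) : Finset (List α) :=
  N1 T T' ∪ Nbase isDel i T T'

/-- `S_x`: the string associated with `x ∈ N1 ∪ Nbase`; it is `S_{x_L}` if no
    strictly longer `y ∈ N1 ∪ Nbase` has `S_{y_G} = S_{x_L}` for some
    `G ∈ {L, R}`, and `S_{x_R}` otherwise. -/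
noncomputable def Sx (isDel : Bool) (i : ℕ) (T T' x : List α) : List α :=
  if ∃ y ∈ NB isDel i T T', x.length < y.length ∧
      (SL isDel i T' y = SL isDel i T' x ∨ SR isDel i T' y = SL isDel i T' x)
  then SR isDel i T' x else SL isDel i T' x

/-- `U(x)`: the shortest string of the form `γ · S_x` that is a substring of `T`
    and left-maximal in `T`. -/
noncomputable def U (isDel : Bool) (i : ℕ) (T T' x : List α) : List α :=
  Classical.epsilon (fun w => Sx isDel i T T' x <:+ w ∧ w <:+: T ∧ LeftMax T w ∧
    ∀ w', Sx isDel i T T' x <:+ w' → w' <:+: T → LeftMax T w' → w.length ≤ w'.length)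

/-- `Nmax`: those `x ∈ N1 ∪ Nbase` with `D_{T'}(x) = D_T(U(x)) + 2`. -/
noncomputable def Nmax (isDel : Bool) (i : ℕ) (T T' : List α) : Finset (List α) :=
  (NB isDel i T T').filter (fun x => D T' x = D T (U isDel i T T' x) + 2)

/-- `Nmid`: those `x ∈ N1 ∪ Nbase` with `D_{T'}(x) = D_T(U(x)) + 1`. -/
noncomputable def Nmid (isDel : Bool) (i : ℕ) (T T' : List α) : Finset (List α) :=
  (NB isDel i T T').filter (fun x => D T' x = D T (U isDel i T T' x) + 1)

/-- `Nless`: those `x ∈ N1 ∪ Nbase` with `D_{T'}(x) ≤ D_T(U(x))`. -/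
noncomputable def Nless (isDel : Bool) (i : ℕ) (T T' : List α) : Finset (List α) :=
  (NB isDel i T T').filter (fun x => D T' x ≤ D T (U isDel i T T' x))

/-- The unique parent `y` of a node `x` of in-degree 1. -/
noncomputable def parent (T x : List α) : List α :=
  Classical.epsilon (fun y => y ∈ Ifin T x)

/-- `q`: the longest proper suffix of `x` belonging to `MR(T)`. -/
noncomputable def qsuf (T x : List α) : List α :=
  Classical.epsilon (fun q => q <:+ x ∧ q ≠ x ∧ q ∈ MRfin T ∧
    ∀ q', q' <:+ x → q' ≠ x → q' ∈ MRfin T → q'.length ≤ q.length)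

/-- `V1(T)`: nodes `x ∈ MR(T)` of in-degree 1 with `x ∉ MR(T')`. -/
noncomputable def V1set (T T' : List α) : Finset (List α) :=
  (MRfin T).filter (fun x => indeg T x = 1 ∧ x ∉ MRfin T')

/-- `V2(T)`: nodes `x ∈ MR(T)` of in-degree 1 whose in-degree in the CDAWG of
    `T'` is at least 2. -/
noncomputable def V2set (T T' : List α) : Finset (List α) :=
  (MRfin T).filter (fun x => indeg T x = 1 ∧ 2 ≤ indeg T' x)

/-- `Va(T) = {x ∈ V2(T) : y ∉ MR(T')}`. -/
noncomputable def Va (T T' : List α) : Finset (List α) :=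
  (V2set T T').filter (fun x => parent T x ∉ MRfin T')

/-- `Vb(T) = {x ∈ V2(T) : y ∈ MR(T'), q ∉ MR(T')}`. -/
noncomputable def Vb (T T' : List α) : Finset (List α) :=
  (V2set T T').filter (fun x => parent T x ∈ MRfin T' ∧ qsuf T x ∉ MRfin T')

/-- `Vc(T) = {x ∈ V2(T) : y ∈ MR(T'), q ∈ MR(T')}`. -/
noncomputable def Vc (T T' : List α) : Finset (List α) :=
  (V2set T T').filter (fun x => parent T x ∈ MRfin T' ∧ qsuf T x ∈ MRfin T')

/-- The starting position of the occurrence of `z` in `w` determined by the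
    in-edge from `z` to `w` in the CDAWG of `T'`: the occurrence such that `z`
    followed by the edge label is a suffix of `w`. -/
noncomputable def detStart (T' z w : List α) : ℕ :=
  Classical.epsilon (fun s => ∃ l a, (z ++ [a]) <:+: T' ∧ rrep T' (z ++ [a]) = w ∧
    z ++ l = w ∧ l.head? = some a ∧ s + z.length + l.length = w.length + 1)

/-- The element of `I_{T'}(w)` whose occurrence in `w` determined by its in-edge
    ends at the rightmost position (the shortest one in case of ties). -/
noncomputable def zsel (T' w : List α) : List α :=
  Classical.epsilon (fun z => z ∈ Ifin T' w ∧
    (∀ z' ∈ Ifin T' w, detStart T' z' w + z'.length ≤ detStart T' z w + z.length) ∧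
    (∀ z' ∈ Ifin T' w, detStart T' z' w + z'.length = detStart T' z w + z.length →
      z.length ≤ z'.length))

/-- The sequence `z_0, z_1, z_2, …` for `x`. -/
noncomputable def zseq (T' x : List α) : ℕ → List α
  | 0 => zsel T' x
  | i + 1 => zsel T' (zseq T' x i)

/-- The index `l` at which the sequence `z_i` stops: the least `i` such that
    `z_i` is a suffix of `y` or `z_i` has in-degree 1 in the CDAWG of `T'`. -/
noncomputable def lIdx (T T' x : List α) : ℕ :=
  sInf {k | zseq T' x k <:+ parent T x ∨ indeg T' (zseq T' x k) = 1}

/-- `z_l(x)`: the last defined `z_i`. -/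
noncomputable def zl (T T' x : List α) : List α := zseq T' x (lIdx T T' x)

/-- The starting position (within `x`) of the composed occurrence of `z_i`
    in `x`, obtained by composing the in-edge occurrences. -/
noncomputable def cstart (T' x : List α) : ℕ → ℕ
  | 0 => detStart T' (zseq T' x 0) x
  | i + 1 => cstart T' x i + detStart T' (zseq T' x (i + 1)) (zseq T' x i) - 1

/-- `Vbt(T)`: the set of `x ∈ Vc(T)` such that `z_l(x)` has in-degree 1 in the
    CDAWG of `T'` and is not a suffix of `y`. -/
noncomputable def Vbt (T T' : List α) : Finset (List α) :=
  (Vc T T').filter (fun x => indeg T' (zl T T' x) = 1 ∧ ¬ (zl T T' x <:+ parent T x))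

/-- `Val(T)`: the set of `x ∈ Vc(T)` such that `z_l(x)` is a suffix of `y`. -/
noncomputable def Valset (T T' : List α) : Finset (List α) :=
  (Vc T T').filter (fun x => zl T T' x <:+ parent T x)

/-- `V_Y(T)`: the set of the unique parents `y` of the strings `x ∈ Val(T)`. -/
noncomputable def VY (T T' : List α) : Finset (List α) :=
  (Valset T T').image (parent T)

/-- `Valz2`: strings `z_l(x)`, `x ∈ Val(T)`, with `D_{T'}(z_l) = D_T(U(z_l)) + 2`. -/
noncomputable def Valz2 (isDel : Bool) (i : ℕ) (T T' : List α) : Finset (List α) :=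
  ((Valset T T').image (zl T T')).filter (fun z => D T' z = D T (U isDel i T T' z) + 2)

/-- `Valz1`: strings `z_l(x)`, `x ∈ Val(T)`, with `D_{T'}(z_l) = D_T(U(z_l)) + 1`. -/
noncomputable def Valz1 (isDel : Bool) (i : ℕ) (T T' : List α) : Finset (List α) :=
  ((Valset T T').image (zl T T')).filter (fun z => D T' z = D T (U isDel i T T' z) + 1)

/-- `Valz0`: strings `z_l(x)`, `x ∈ Val(T)`, with `D_{T'}(z_l) ≤ D_T(U(z_l))`. -/
noncomputable def Valz0 (isDel : Bool) (i : ℕ) (T T' : List α) : Finset (List α) :=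
  ((Valset T T').image (zl T T')).filter (fun z => D T' z ≤ D T (U isDel i T T' z))

/-- The pairs `(x, a)` with `x ∈ N2 ∪ Q` and `a` a new right-extension of `x` in
`T'`: `xa` is not a substring of `T` and some crossing occurrence of `x` in `T'`
is immediately followed by `a`. -/
noncomputable def newPairs (isDel : Bool) (i : ℕ) (T T' : List α) : Finset (List α × α) :=
  ((N2 T T' ∪ Q T T') ×ˢ T'.toFinset).filter
    (fun p => ¬ (p.1 ++ [p.2]) <:+: T ∧
      ∃ j, CrossAt isDel i T' p.1 j ∧ OccAt T' (p.1 ++ [p.2]) j)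

end CDAWG


section Stmt5Aux

open CDAWG List

variable {β : Type*}

lemma occAt_infix {S x : List β} {j : ℕ} (h : OccAt S x j) : x <:+: S := by
  have h1 : x <+: S.drop (j-1) := h.2.2.2 ▸ List.take_prefix _ _
  exact h1.isInfix.trans (List.drop_suffix _ _).isInfix

lemma infix_occAt {S x : List β} (h : x <:+: S) (hx : x ≠ []) : ∃ j, OccAt S x j := by
  obtain ⟨s, t, rfl⟩ := h
  refine ⟨s.length + 1, by omega, hx, by simp only [List.length_append]; omega, ?_⟩
  have : s ++ x ++ t = s ++ (x ++ t) := by simp [List.append_assoc]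
  rw [this, Nat.add_sub_cancel, List.drop_left' rfl, List.take_left' rfl]

lemma occAt_of_prefix {S x y : List β} {j : ℕ} (h : OccAt S y j) (hp : x <+: y)
    (hx : x ≠ []) : OccAt S x j := by
  have hl := hp.length_le
  refine ⟨h.1, hx, by have := h.2.2.1; omega, ?_⟩
  have h4 := h.2.2.2
  calc (S.drop (j-1)).take x.length
      = ((S.drop (j-1)).take y.length).take x.length := by
        rw [List.take_take, min_eq_left hl]
    _ = y.take x.length := by rw [h4]
    _ = x := by
        obtain ⟨r, rfl⟩ := hp
        rw [List.take_left' rfl]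

lemma occAt_append_right {S u v : List β} {j : ℕ} (h : OccAt S (u ++ v) j)
    (hv : v ≠ []) : OccAt S v (j + u.length) := by
  refine ⟨by have := h.1; omega, hv, by have := h.2.2.1; simp only [List.length_append] at this; omega, ?_⟩
  have h4 := h.2.2.2
  rw [List.length_append] at h4
  have hd : S.drop (j + u.length - 1) = (S.drop (j-1)).drop u.length := by
    rw [List.drop_drop]; congr 1; have := h.1; omega
  rw [hd]
  calc ((S.drop (j-1)).drop u.length).take v.length
      = ((S.drop (j-1)).take (u.length + v.length)).drop u.length := by
        rw [List.drop_take]; congr 1; omega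
    _ = (u ++ v).drop u.length := by rw [h4]
    _ = v := List.drop_left' rfl

lemma occAt_cons_combine {S x w : List β} {e : β} {j : ℕ} (h1 : OccAt S (e :: x) j)
    (h2 : OccAt S w (j+1)) : OccAt S (e :: w) j := by
  have hj := h1.1
  have hb2 := h2.2.2.1
  have h14 := h1.2.2.2
  have h24 := h2.2.2.2
  cases hl : S.drop (j-1) with
  | nil => rw [hl] at h14; simp at h14
  | cons b t =>
    rw [hl] at h14
    rw [List.length_cons, List.take_succ_cons] at h14
    obtain ⟨hbe, -⟩ := List.cons.injEq .. ▸ h14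
    have hdrop : S.drop j = t := by
      have : S.drop j = (S.drop (j-1)).drop 1 := by rw [List.drop_drop]; congr 1; omega
      rw [this, hl]; simp
    rw [Nat.add_sub_cancel, hdrop] at h24
    refine ⟨hj, by simp, by simp; omega, ?_⟩
    rw [hl, List.length_cons, List.take_succ_cons, h24, hbe]

lemma prefix_occAt {S x : List β} (hp : x <+: S) (hx : x ≠ []) : OccAt S x 1 := by
  refine ⟨le_refl 1, hx, by have := hp.length_le; omega, ?_⟩
  simpa using (List.prefix_iff_eq_take.mp hp).symm

lemma occAt_one_prefix {S x : List β} (h : OccAt S x 1) : x <+: S := by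
  have := h.2.2.2
  simp at this
  exact List.prefix_iff_eq_take.mpr this.symm

lemma mem_infixes [DecidableEq β] {T x : List β} : x ∈ infixes T ↔ x <:+: T := by
  simp only [CDAWG.infixes, List.mem_toFinset, List.mem_flatMap, List.mem_tails,
    List.mem_inits, List.infix_iff_prefix_suffix]
  tauto

noncomputable def nextc (T a : List β) [Nonempty β] : β :=
  Classical.epsilon (fun c => (a ++ [c]) <:+: T)

lemma occAt_next {T a : List β} {j : ℕ} (hnr : ¬ RightMax T a) (hj : OccAt T a j) :
    ∃ d, OccAt T (a ++ [d]) j := by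
  have hs : ¬ a <:+ T := fun h => hnr ⟨occAt_infix hj, Or.inr h⟩
  have hb := hj.2.2.1
  have hj1 := hj.1
  have hlt : j - 1 + a.length < T.length := by
    rcases Nat.lt_or_ge (j - 1 + a.length) T.length with h | h
    · exact h
    · exfalso; apply hs
      have hlen : (T.drop (j-1)).length ≤ a.length := by simp [List.length_drop]; omega
      have h4 := hj.2.2.2
      rw [List.take_of_length_le hlen] at h4
      exact h4 ▸ List.drop_suffix _ _
  obtain ⟨d, hd⟩ : ∃ d, T[j-1+a.length]? = some d := ⟨_, List.getElem?_eq_getElem hlt⟩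
  refine ⟨d, hj.1, by simp, by simp; omega, ?_⟩
  rw [List.length_append, List.length_singleton, List.take_succ, hj.2.2.2,
    List.getElem?_drop, hd]
  simp

lemma nextc_infix {T a : List β} [Nonempty β] (ha : a <:+: T) (h0 : a ≠ [])
    (hnr : ¬ RightMax T a) : (a ++ [nextc T a]) <:+: T := by
  obtain ⟨j, hj⟩ := infix_occAt ha h0
  obtain ⟨d, hd⟩ := occAt_next hnr hj
  exact Classical.epsilon_spec (⟨d, occAt_infix hd⟩ : ∃ c, (a ++ [c]) <:+: T)

lemma nextc_occ {T a : List β} [Nonempty β] (hnr : ¬ RightMax T a) {j : ℕ}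
    (hj : OccAt T a j) : OccAt T (a ++ [nextc T a]) j := by
  obtain ⟨d, hd⟩ := occAt_next hnr hj
  by_cases hde : d = nextc T a
  · rwa [hde] at hd
  · exact absurd ⟨occAt_infix hj, Or.inl ⟨d, nextc T a, hde, occAt_infix hd,
      nextc_infix (occAt_infix hj) hj.2.1 hnr⟩⟩ hnr

noncomputable def Rf (T : List β) [Nonempty β] : ℕ → List β → List β
  | 0, a => a
  | n+1, a => if RightMax T a then a else Rf T n (a ++ [nextc T a])

lemma Rf_prefix (T : List β) [Nonempty β] : ∀ n a, a <+: Rf T n a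
  | 0, a => List.prefix_rfl
  | n+1, a => by
    by_cases h : RightMax T a
    · rw [Rf, if_pos h]
    · rw [Rf, if_neg h]
      exact (List.prefix_append a _).trans (Rf_prefix T n _)

lemma Rf_occ (T : List β) [Nonempty β] :
    ∀ n a, a ≠ [] → ∀ j, OccAt T a j → OccAt T (Rf T n a) j
  | 0, a, _, j, hj => hj
  | n+1, a, h0, j, hj => by
    by_cases h : RightMax T a
    · rw [Rf, if_pos h]; exact hj
    · rw [Rf, if_neg h]
      exact Rf_occ T n _ (by simp) j (nextc_occ h hj)

lemma Rf_infix (T : List β) [Nonempty β] :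
    ∀ n a, a <:+: T → a ≠ [] → Rf T n a <:+: T
  | 0, a, ha, _ => ha
  | n+1, a, ha, h0 => by
    by_cases h : RightMax T a
    · rw [Rf, if_pos h]; exact ha
    · rw [Rf, if_neg h]
      exact Rf_infix T n _ (nextc_infix ha h0 h) (by simp)

lemma Rf_rightMax (T : List β) [Nonempty β] :
    ∀ n a, a <:+: T → a ≠ [] → T.length + 1 ≤ n + a.length → RightMax T (Rf T n a)
  | 0, a, ha, _, hl => by
    exfalso; have := ha.length_le; omega
  | n+1, a, ha, h0, hl => by
    by_cases h : RightMax T a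
    · rw [Rf, if_pos h]; exact h
    · rw [Rf, if_neg h]
      exact Rf_rightMax T n _ (nextc_infix ha h0 h) (by simp)
        (by simp [List.length_append]; omega)

noncomputable def Rr (T a : List β) [Nonempty β] : List β := Rf T (T.length + 1) a

lemma Rr_prefix (T a : List β) [Nonempty β] : a <+: Rr T a := Rf_prefix T _ a

lemma Rr_occ {T a : List β} [Nonempty β] (h0 : a ≠ []) {j : ℕ} (hj : OccAt T a j) :
    OccAt T (Rr T a) j := Rf_occ T _ a h0 j hj

lemma Rr_infix {T a : List β} [Nonempty β] (ha : a <:+: T) (h0 : a ≠ []) :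
    Rr T a <:+: T := Rf_infix T _ a ha h0

lemma Rr_rightMax {T a : List β} [Nonempty β] (ha : a <:+: T) (h0 : a ≠ []) :
    RightMax T (Rr T a) := Rf_rightMax T _ a ha h0 (by omega)

lemma Rr_nil (T : List β) [Nonempty β] : Rr T ([] : List β) = [] := by
  rw [Rr, Rf, if_pos ⟨List.nil_infix, Or.inr (List.nil_suffix)⟩]

lemma nil_mem_Mfin [DecidableEq β] (T : List β) : ([] : List β) ∈ Mfin T := by
  rw [Mfin, Finset.mem_filter]
  exact ⟨mem_infixes.mpr (List.nil_infix),
    ⟨List.nil_infix, Or.inr List.nil_prefix⟩,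
    ⟨List.nil_infix, Or.inr (List.nil_suffix)⟩⟩

lemma Rr_mem_Mfin [DecidableEq β] {T x u : List β} [Nonempty β] (hxT : x <:+: T)
    (hlx : LeftMax T x) (hux : u <+: x) (hu0 : u ≠ []) : Rr T u ∈ Mfin T := by
  have hx0 : x ≠ [] := by
    intro h; exact hu0 (List.prefix_nil.mp (h ▸ hux))
  have huT : u <:+: T := hux.isInfix.trans hxT
  have hwin : Rr T u <:+: T := Rr_infix huT hu0
  have hwrm : RightMax T (Rr T u) := Rr_rightMax huT hu0
  have hwlm : LeftMax T (Rr T u) := by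
    refine ⟨hwin, ?_⟩
    rcases hlx.2 with ⟨b, c, hbc, hb, hc⟩ | hxp
    · have key : ∀ e : β, (e :: x) <:+: T → (e :: Rr T u) <:+: T := by
        intro e he
        obtain ⟨j, hj⟩ := infix_occAt he (by simp)
        have hx1 : OccAt T x (j + 1) := by
          have := occAt_append_right (u := [e]) (v := x) (by simpa using hj) hx0
          simpa using this
        have hw1 : OccAt T (Rr T u) (j+1) := Rr_occ hu0 (occAt_of_prefix hx1 hux hu0)
        exact occAt_infix (occAt_cons_combine hj hw1)
      exact Or.inl ⟨b, c, hbc, key b hb, key c hc⟩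
    · have h1 : OccAt T x 1 := prefix_occAt hxp hx0
      have hw1 : OccAt T (Rr T u) 1 := Rr_occ hu0 (occAt_of_prefix h1 hux hu0)
      exact Or.inr (occAt_one_prefix hw1)
  rw [Mfin, Finset.mem_filter]
  exact ⟨mem_infixes.mpr hwin, hwlm, hwrm⟩

lemma no_collision {T u v : List β} [Nonempty β] (hu0 : u ≠ [])
    (hlen : u.length < v.length) (hsuf : u <:+ v) {s0 : ℕ} (hocc : OccAt T v s0)
    (hR : Rr T u = Rr T v) : False := by
  have hv0 : v ≠ [] := by intro h; rw [h] at hlen; simp at hlen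
  have hvp : v <+: Rr T u := hR ▸ Rr_prefix T v
  have hfwd : ∀ s, OccAt T u s → OccAt T v s := by
    intro s hs
    exact occAt_of_prefix (Rr_occ hu0 hs) hvp hv0
  obtain ⟨δ, rfl⟩ := hsuf
  have hδ : 1 ≤ δ.length := by
    rcases δ with _ | ⟨d, δ⟩
    · simp at hlen
    · simp
  have hchain : ∀ m : ℕ, ∃ s, m ≤ s ∧ OccAt T (δ ++ u) s := by
    intro m
    induction m with
    | zero => exact ⟨s0, Nat.zero_le _, hocc⟩
    | succ m ih =>
      obtain ⟨s, hms, hs⟩ := ih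
      exact ⟨s + δ.length, by omega, hfwd _ (occAt_append_right hs hu0)⟩
  obtain ⟨s, hms, hs⟩ := hchain (T.length + 1)
  have hb := hs.2.2.1
  have : 1 ≤ (δ ++ u).length := by simp [List.length_append]; omega
  omega

lemma mem_N2Q [DecidableEq β] {T T' x : List β} (h : x ∈ N2 T T' ∪ Q T T') :
    x <:+: T ∧ LeftMax T x := by
  rcases Finset.mem_union.mp h with h | h
  · have h2 := (Finset.mem_inter.mp h).2
    rw [LeftMfin, Finset.mem_filter] at h2
    exact ⟨mem_infixes.mp h2.1, h2.2⟩
  · have h2 := (Finset.mem_inter.mp h).2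
    rw [MRfin] at h2
    have h3 := Finset.mem_of_mem_erase h2
    rw [Mfin, Finset.mem_filter] at h3
    exact ⟨mem_infixes.mp h3.1, h3.2.1⟩

noncomputable def fmap (isDel : Bool) (i : ℕ) (T T' : List β) [Nonempty β]
    (p : List β × β) : List β :=
  if h : ∃ j, CrossAt isDel i T' p.1 j ∧ OccAt T' (p.1 ++ [p.2]) j then
    Rr T ((T.take (i-1)).drop (Nat.find h - 1))
  else []

lemma main_inj [DecidableEq β] {T T' : List β} [Nonempty β] (isDel : Bool) (i : ℕ)
    (hi : 1 ≤ i) (hi' : i - 1 ≤ T.length)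
    (hexcl : ∀ y : List β,
      (if isDel then OccAt T' y i else OccAt T' y (i+1)) → y <:+: T)
    (htake : T'.take (i-1) = T.take (i-1)) :
    (newPairs isDel i T T').card ≤ (Mfin T).card := by
  classical
  -- facts about crossing witnesses
  have cross_facts : ∀ {x : List β} {a : β} {j : ℕ}, CrossAt isDel i T' x j →
      OccAt T' (x ++ [a]) j → ¬ (x ++ [a]) <:+: T → j ≤ i ∧ i - j ≤ x.length := by
    intro x a j hc ho hni
    obtain ⟨hox, hd⟩ := hc
    have hx1 : 1 ≤ x.length := List.length_pos_iff.mpr hox.2.1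
    have hj1 : 1 ≤ j := hox.1
    cases isDel with
    | false =>
      simp only [if_false, Bool.false_eq_true] at hd hexcl
      rcases hd with h | h | h
      · omega
      · omega
      · exfalso; subst h; exact hni (hexcl _ ho)
    | true =>
      simp only [if_true] at hd hexcl
      rcases hd with h | h | h
      · omega
      · omega
      · exfalso; subst h; exact hni (hexcl _ ho)
  have hA : (T.take (i-1)).length = i - 1 := by
    rw [List.length_take]; omega
  have hαlen : ∀ j : ℕ, ((T.take (i-1)).drop (j-1)).length = (i-1) - (j-1) := by
    intro j; rw [List.length_drop, hA]
  have hαocc : ∀ j : ℕ, 1 ≤ j → j ≤ i → (T.take (i-1)).drop (j-1) ≠ [] →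
      OccAt T ((T.take (i-1)).drop (j-1)) j := by
    intro j hj1 hji hne
    refine ⟨hj1, hne, by rw [hαlen]; omega, ?_⟩
    rw [hαlen, List.drop_take]
  have hαpre : ∀ {x : List β} {j : ℕ}, OccAt T' x j → i - j ≤ x.length → 1 ≤ j →
      (T.take (i-1)).drop (j-1) <+: x := by
    intro x j hox hlx hj1
    have hcalc : (T.take (i-1)).drop (j-1) = x.take (i - j) := by
      calc (T.take (i-1)).drop (j-1)
          = (T'.take (i-1)).drop (j-1) := by rw [htake]
        _ = (T'.drop (j-1)).take ((i-1) - (j-1)) := by rw [List.drop_take]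
        _ = (T'.drop (j-1)).take (i - j) := by congr 1; omega
        _ = ((T'.drop (j-1)).take x.length).take (i - j) := by
            rw [List.take_take, min_eq_left hlx]
        _ = x.take (i - j) := by rw [hox.2.2.2]
    rw [hcalc]
    exact List.take_prefix _ _
  apply Finset.card_le_card_of_injOn (fmap isDel i T T')
  · -- maps to Mfin T
    intro p hp
    simp only [Finset.mem_coe, newPairs, Finset.mem_filter, Finset.mem_product] at hp
    obtain ⟨⟨hp1, -⟩, hni, hex⟩ := hp
    rw [fmap, dif_pos hex]
    set j := Nat.find hex with hjdef
    obtain ⟨hc, ho⟩ := Nat.find_spec hex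
    obtain ⟨hji, hlx⟩ := cross_facts hc ho hni
    by_cases hαe : (T.take (i-1)).drop (j-1) = []
    · rw [hαe, Rr_nil]
      exact nil_mem_Mfin T
    · obtain ⟨hxT, hlm⟩ := mem_N2Q hp1
      exact Rr_mem_Mfin hxT hlm (hαpre hc.1 hlx hc.1.1) hαe
  · -- injective
    intro p hp q hq hfeq
    simp only [Finset.mem_coe, newPairs, Finset.mem_filter, Finset.mem_product] at hp hq
    obtain ⟨⟨hp1, -⟩, hpni, hexp⟩ := hp
    obtain ⟨⟨hq1, -⟩, hqni, hexq⟩ := hq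
    rw [fmap, dif_pos hexp, fmap, dif_pos hexq] at hfeq
    obtain ⟨hcp, hop⟩ := Nat.find_spec hexp
    obtain ⟨hcq, hoq⟩ := Nat.find_spec hexq
    set jp := Nat.find hexp with hjpdef
    set jq := Nat.find hexq with hjqdef
    obtain ⟨hpji, hplx⟩ := cross_facts hcp hop hpni
    obtain ⟨hqji, hqlx⟩ := cross_facts hcq hoq hqni
    -- KEY : different witnesses collide
    have KEY : ∀ (j1 j2 : ℕ), j2 < j1 → j1 ≤ i → 1 ≤ j2 →
        Rr T ((T.take (i-1)).drop (j1-1)) = Rr T ((T.take (i-1)).drop (j2-1)) → False := by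
      intro j1 j2 hlt hj1i hj21 hReq
      set u := (T.take (i-1)).drop (j1-1) with hu
      set v := (T.take (i-1)).drop (j2-1) with hv
      have hul : u.length = (i-1) - (j1-1) := hαlen j1
      have hvl : v.length = (i-1) - (j2-1) := hαlen j2
      have hlen : u.length < v.length := by rw [hul, hvl]; omega
      by_cases hue : u = []
      · have : v <+: Rr T v := Rr_prefix T v
        rw [← hReq, hue, Rr_nil] at this
        have := List.prefix_nil.mp this
        rw [this] at hvl hlen
        simp at hlen
      · have hsuf : u <:+ v := by
          have : u = v.drop (j1 - j2) := by
            rw [hu, hv, List.drop_drop]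
            congr 1; omega
          rw [this]
          exact List.drop_suffix _ _
        have hve : v ≠ [] := by
          intro h; rw [h] at hlen; simp at hlen
        have hvocc : OccAt T v j2 := hαocc j2 hj21 (by omega) hve
        exact no_collision hue hlen hsuf hvocc hReq
    rcases lt_trichotomy jp jq with hlt | heq | hgt
    · exact absurd (hfeq.symm) (fun h => KEY jq jp hlt hqji hcp.1.1 h)
    · -- same witness position: pairs must be equal
      have hoq' : OccAt T' (q.1 ++ [q.2]) jp := heq ▸ hoq
      have hocq : OccAt T' q.1 jp := heq ▸ hcq.1
      have hocp : OccAt T' p.1 jp := hcp.1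
      -- both p.1++[p.2] and q.1++[q.2] occur at jp
      have extract : ∀ (y : List β), OccAt T' y jp → y = (T'.drop (jp-1)).take y.length := by
        intro y hy; exact hy.2.2.2.symm
      rcases lt_trichotomy p.1.length q.1.length with hl | hl | hl
      · exfalso
        apply hpni
        have hpre : p.1 ++ [p.2] <+: q.1 := by
          have h1 := extract _ hop
          have h2 := extract _ hocq
          have : (p.1 ++ [p.2]) = q.1.take (p.1.length + 1) := by
            rw [h2, List.take_take, min_eq_left (by simp [List.length_append] at h1 ⊢; omega)]
            rw [h1]; simp [List.length_append]
          rw [this]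
          exact List.take_prefix _ _
        exact hpre.isInfix.trans (mem_N2Q hq1).1
      · have h1 := extract _ hop
        have h2 := extract _ hoq'
        have heq2 : p.1 ++ [p.2] = q.1 ++ [q.2] := by
          rw [h1, h2]; simp [List.length_append, hl]
        obtain ⟨he1, he2⟩ := List.append_inj' heq2 rfl
        have he3 : p.2 = q.2 := by simpa using he2
        exact Prod.ext he1 he3
      · exfalso
        apply hqni
        have hpre : q.1 ++ [q.2] <+: p.1 := by
          have h1 := extract _ hoq'
          have h2 := extract _ hocp
          have : (q.1 ++ [q.2]) = p.1.take (q.1.length + 1) := by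
            rw [h2, List.take_take, min_eq_left (by simp [List.length_append] at h1 ⊢; omega)]
            rw [h1]; simp [List.length_append]
          rw [this]
          exact List.take_prefix _ _
        exact hpre.isInfix.trans (mem_N2Q hp1).1
    · exact absurd hfeq (fun h => KEY jp jq hgt hpji hcq.1.1 h)

end Stmt5Aux

/-- The number of pairs `(x, a)` with `x ∈ N2 ∪ Q` and `a` a new
right-extension of `x` in `T'` is at most `|M(T)|`. -/
theorem stmt5 {α : Type*} [DecidableEq α] (T T' : List α) (i : ℕ) (ed : CDAWG.Edit α)
    (hval : CDAWG.Edit.valid T i ed) (happ : T' = CDAWG.Edit.apply T i ed)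
    (hend : ∃ c : α, T.getLast? = some c ∧ T.count c = 1 ∧
      T'.getLast? = some c ∧ T'.count c = 1) :
    (CDAWG.newPairs ed.isDel i T T').card ≤ (CDAWG.Mfin T).card := by
  classical
  obtain ⟨c, hTl, hcT, hTl', hcT'⟩ := hend
  haveI : Nonempty α := ⟨c⟩
  cases ed with
  | ins c' =>
    obtain ⟨h1, h2⟩ := hval
    have hA : (T.take (i-1)).length = i - 1 := by rw [List.length_take]; omega
    have hT' : T' = T.take (i-1) ++ c' :: T.drop (i-1) := happ
    have htake : T'.take (i-1) = T.take (i-1) := by rw [hT', List.take_left' hA]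
    have hdrop : T'.drop i = T.drop (i-1) := by
      have hstep : T'.drop (i-1) = c' :: T.drop (i-1) := by rw [hT', List.drop_left' hA]
      have h3 : T'.drop i = (T'.drop (i-1)).drop 1 := by
        rw [List.drop_drop]; congr 1; omega
      rw [h3, hstep]; simp
    have hlen' : T'.length = T.length + 1 := by
      rw [hT']; simp only [List.length_append, List.length_cons, List.length_take,
        List.length_drop]; omega
    refine main_inj false i h1 (by omega) ?_ htake
    intro y hy
    simp only [Bool.false_eq_true, if_false] at hy
    refine occAt_infix (S := T) (x := y) (j := i) ⟨by omega, hy.2.1, ?_, ?_⟩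
    · have := hy.2.2.1; omega
    · have h4 := hy.2.2.2
      simp only [Nat.add_sub_cancel] at h4
      rw [← hdrop]; exact h4
  | del =>
    obtain ⟨h1, h2⟩ := hval
    have hA : (T.take (i-1)).length = i - 1 := by rw [List.length_take]; omega
    have hT' : T' = T.take (i-1) ++ T.drop i := happ
    have htake : T'.take (i-1) = T.take (i-1) := by rw [hT', List.take_left' hA]
    have hdrop : T'.drop (i-1) = T.drop i := by rw [hT', List.drop_left' hA]
    have hlen' : T'.length = T.length - 1 := by
      rw [hT']; simp only [List.length_append, List.length_take, List.length_drop]; omega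
    refine main_inj true i h1 (by omega) ?_ htake
    intro y hy
    simp only [if_true] at hy
    refine occAt_infix (S := T) (x := y) (j := i+1) ⟨by omega, hy.2.1, ?_, ?_⟩
    · have := hy.2.2.1; omega
    · have h4 := hy.2.2.2
      simp only [Nat.add_sub_cancel] at h4 ⊢
      rw [← hdrop]; exact h4
  | sub c' =>
    obtain ⟨h1, h2⟩ := hval
    have hA : (T.take (i-1)).length = i - 1 := by rw [List.length_take]; omega
    have hT' : T' = T.take (i-1) ++ c' :: T.drop i := happ
    have htake : T'.take (i-1) = T.take (i-1) := by rw [hT', List.take_left' hA]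
    have hdrop : T'.drop i = T.drop i := by
      have hstep : T'.drop (i-1) = c' :: T.drop i := by rw [hT', List.drop_left' hA]
      have h3 : T'.drop i = (T'.drop (i-1)).drop 1 := by
        rw [List.drop_drop]; congr 1; omega
      rw [h3, hstep]; simp
    have hlen' : T'.length = T.length := by
      rw [hT']; simp only [List.length_append, List.length_cons, List.length_take,
        List.length_drop]; omega
    refine main_inj false i h1 (by omega) ?_ htake
    intro y hy
    simp only [Bool.false_eq_true, if_false] at hy
    refine occAt_infix (S := T) (x := y) (j := i+1) ⟨by omega, hy.2.1, ?_, ?_⟩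
    · have := hy.2.2.1; omega
    · have h4 := hy.2.2.2
      simp only [Nat.add_sub_cancel] at h4 ⊢
      rw [← hdrop]; exact h4
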